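/- arXiv:2304.14054 — 3 statements merged into one kernel-verified Lean document; each statement's English description precedes it below -/
import Mathlib

section
/- With the acoustic solver pressures, the CCH entropy production in a cell is nonnegative: T dS/dt = (P*_r − P)(u*_{j+1} − u) + (P*_l − P)(u − u*_j) = ρc[(u*_{j+1} − u)² + (u − u*_j)²] ≥ 0, where P*_r = P + ρc(u*_{j+1} − u) and P*_l = P − ρc(u*_j − u). -/
/-- CCH entropy production with acoustic (first-order) sub-cell pressures:
(P*_r − P)(u*_{j+1} − u) + (P*_l − P)(u − u*_j) = ρc[(u*_{j+1}−u)² + (u−u*_j)²] ≥ 0. -/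
theorem cch_entropy_first_order (ρ c u P ustarL ustarR : ℝ)
    (hρ : 0 < ρ) (hc : 0 < c) :
    ((P + ρ * c * (ustarR - u)) - P) * (ustarR - u) +
        ((P - ρ * c * (ustarL - u)) - P) * (u - ustarL) =
      ρ * c * ((ustarR - u) ^ 2 + (u - ustarL) ^ 2) ∧
    0 ≤ ρ * c * ((ustarR - u) ^ 2 + (u - ustarL) ^ 2) :=
  ⟨by ring, by positivity⟩
end

section
/- With second-order sub-cell pressures, the CCH entropy production equals ρc[(u*_{j+1} − u)² + (u − u*_j)²] + ((γ+1)/2)ρ[(u*_{j+1} − u)³ + (u − u*_j)³], and this quantity is nonnegative provided the admissibility conditions ρc(u*_{j+1} − u)² ≥ ((γ+1)/2)ρ|u*_{j+1} − u|³ and ρc(u − u*_j)² ≥ ((γ+1)/2)ρ|u − u*_j|³ hold. -/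
/-!
Writing `a = u*_{j+1} - u` and `b = u - u*_j`, each sub-cell contributes `ρc x² + ((γ+1)/2)ρ x³`
with `x = a` or `x = b`. The cubic term can only be negative when `x < 0`, and then its size is
`((γ+1)/2)ρ|x|³`, which the admissibility condition bounds by the quadratic term.
-/

theorem add_mul_pow_three_nonneg {α : Type*} [Ring α] [LinearOrder α] [IsStrictOrderedRing α]
    {k m x : α} (hk : 0 ≤ k) (h : k * |x| ^ 3 ≤ m) : 0 ≤ m + k * x ^ 3 := by
  have hcube : 0 ≤ x ^ 3 + |x| ^ 3 := by
    rw [← abs_pow]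
    exact neg_le_iff_add_nonneg.mp (neg_abs_le _)
  calc 0 ≤ k * (x ^ 3 + |x| ^ 3) := mul_nonneg hk hcube
    _ = k * |x| ^ 3 + k * x ^ 3 := by rw [mul_add, add_comm]
    _ ≤ m + k * x ^ 3 := add_le_add_left h _

theorem cch_entropy_second_order_general (ρ c u P γ ustarL ustarR : ℝ)
    (hρ : 0 < ρ) (hγ : 1 ≤ γ)
    (hadmR : (γ + 1) / 2 * ρ * |ustarR - u| ^ 3 ≤ ρ * c * (ustarR - u) ^ 2)
    (hadmL : (γ + 1) / 2 * ρ * |u - ustarL| ^ 3 ≤ ρ * c * (u - ustarL) ^ 2) :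
    ((P + ρ * c * (ustarR - u) + (γ + 1) / 2 * ρ * (ustarR - u) ^ 2) - P) * (ustarR - u) +
        ((P - ρ * c * (ustarL - u) + (γ + 1) / 2 * ρ * (ustarL - u) ^ 2) - P) *
          (u - ustarL) =
      ρ * c * ((ustarR - u) ^ 2 + (u - ustarL) ^ 2) +
        (γ + 1) / 2 * ρ * ((ustarR - u) ^ 3 + (u - ustarL) ^ 3) ∧
    0 ≤ ρ * c * ((ustarR - u) ^ 2 + (u - ustarL) ^ 2) +
        (γ + 1) / 2 * ρ * ((ustarR - u) ^ 3 + (u - ustarL) ^ 3) := by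
  refine ⟨by ring, ?_⟩
  have hk : 0 ≤ (γ + 1) / 2 * ρ := by positivity
  have hR := add_mul_pow_three_nonneg hk hadmR
  have hL := add_mul_pow_three_nonneg hk hadmL
  linear_combination hR + hL

/-- CCH entropy production with second-order sub-cell pressures equals
ρc[a² + b²] + ((γ+1)/2)ρ[a³ + b³] with a = u*_{j+1}−u, b = u−u*_j, and is nonnegative
under the admissibility conditions. -/
theorem cch_entropy_second_order (ρ c u P γ ustarL ustarR : ℝ)
    (hρ : 0 < ρ) (hc : 0 < c) (hγ : 1 ≤ γ)
    (hadmR : (γ + 1) / 2 * ρ * |ustarR - u| ^ 3 ≤ ρ * c * (ustarR - u) ^ 2)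
    (hadmL : (γ + 1) / 2 * ρ * |u - ustarL| ^ 3 ≤ ρ * c * (u - ustarL) ^ 2) :
    ((P + ρ * c * (ustarR - u) + (γ + 1) / 2 * ρ * (ustarR - u) ^ 2) - P) * (ustarR - u) +
        ((P - ρ * c * (ustarL - u) + (γ + 1) / 2 * ρ * (ustarL - u) ^ 2) - P) *
          (u - ustarL) =
      ρ * c * ((ustarR - u) ^ 2 + (u - ustarL) ^ 2) +
        (γ + 1) / 2 * ρ * ((ustarR - u) ^ 3 + (u - ustarL) ^ 3) ∧
    0 ≤ ρ * c * ((ustarR - u) ^ 2 + (u - ustarL) ^ 2) +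
        (γ + 1) / 2 * ρ * ((ustarR - u) ^ 3 + (u - ustarL) ^ 3) :=
  cch_entropy_second_order_general ρ c u P γ ustarL ustarR hρ hγ hadmR hadmL
end

section
/- Conservation of total energy for the SGH predictor step: define u^{n+1}_j = u^n_j − (Δt/m_j)(P*_{j+1/2} − P*_{j−1/2}) (zero pressure at or beyond the boundary handled by boundary terms) and ε^{n+1}_{j+1/2} = ε^n_{j+1/2} − (Δt/m_{j+1/2}) P*_{j+1/2}(u*_{j+1} − u*_j), where u*_j = (u^n_j + u^{n+1}_j)/2. Then the total energy Σ_j m_{j+1/2} ε_{j+1/2} + Σ_j (1/2) m_j u_j² changes between steps n and n+1 only by the boundary flux Δt(P*_{N+1/2} u*_{N+1} − P*_{1/2} u*_1) (interpreting P*_{1/2}, P*_{N+3/2} as boundary pressures). -/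
/-!
The kinetic energy update at a node is `m u* (u' - u)`, i.e. `-Δt u*_j (P_{j+1} - P_j)`, and the
internal energy update of a cell is `-Δt P_i (u*_i - u*_{i-1})`. Summed over nodes and cells these
two sums of products cancel by summation by parts, up to the boundary terms.
-/

open Finset

theorem sum_Icc_mul_sub_add_sum_range_mul_sub {R : Type*} [CommRing R] (N : ℕ) (P v : ℕ → R) :
    (∑ i ∈ Icc 1 N, P i * (v i - v (i - 1))) + ∑ j ∈ range (N + 1), v j * (P (j + 1) - P j) =
      P (N + 1) * v N - P 0 * v 0 := by
  induction N with
  | zero => simp only [zero_lt_one, Icc_eq_empty_of_lt, sum_empty, zero_add, sum_range_one]; ring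
  | succ n ih =>
    rw [sum_Icc_succ_top (by omega), sum_range_succ, Nat.add_sub_cancel]
    linear_combination ih

theorem half_mul_sq_eq_of_momentum_update {K : Type*} [Field K] {m u u' Δt F : K} (hm : m ≠ 0)
    (hu' : u' = u - Δt / m * F) :
    1 / 2 * m * u' ^ 2 = 1 / 2 * m * u ^ 2 - Δt * ((u + u') / 2 * F) := by
  have hmom : m * (u' - u) = -Δt * F := by rw [hu']; field_simp; ring
  linear_combination (u + u') / 2 * hmom

theorem mul_eq_of_internal_energy_update {K : Type*} [Field K] {m ε ε' Δt W : K} (hm : m ≠ 0)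
    (hε' : ε' = ε - Δt / m * W) :
    m * ε' = m * ε - Δt * W := by
  rw [hε']; field_simp

/-- Nodes `j = 0, …, N`; cell `i = 1, …, N` lies between nodes `i - 1` and `i`; `P 0` and
`P (N + 1)` are the boundary pressures. -/
theorem sgh_energy_conservation_general (N : ℕ) (mnode mcell u u' ε ε' P : ℕ → ℝ) (Δt : ℝ)
    (hmn : ∀ j, 0 < mnode j) (hmc : ∀ i, 0 < mcell i)
    (hmom : ∀ j ∈ Finset.range (N + 1),
      u' j = u j - Δt / mnode j * (P (j + 1) - P j))
    (heps : ∀ i ∈ Finset.Icc 1 N,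
      ε' i = ε i - Δt / mcell i * P i *
        ((u i + u' i) / 2 - (u (i - 1) + u' (i - 1)) / 2)) :
    (∑ i ∈ Finset.Icc 1 N, mcell i * ε' i) +
        ∑ j ∈ Finset.range (N + 1), (1 / 2) * mnode j * (u' j) ^ 2 =
      (∑ i ∈ Finset.Icc 1 N, mcell i * ε i) +
          ∑ j ∈ Finset.range (N + 1), (1 / 2) * mnode j * (u j) ^ 2 -
        Δt * (P (N + 1) * ((u N + u' N) / 2) - P 0 * ((u 0 + u' 0) / 2)) := by
  have hint : ∀ i ∈ Icc 1 N, mcell i * ε' i = mcell i * ε i -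
      Δt * (P i * ((u i + u' i) / 2 - (u (i - 1) + u' (i - 1)) / 2)) := fun i hi =>
    mul_eq_of_internal_energy_update (hmc i).ne' (by rw [heps i hi, mul_assoc])
  have hkin : ∀ j ∈ range (N + 1), 1 / 2 * mnode j * u' j ^ 2 =
      1 / 2 * mnode j * u j ^ 2 - Δt * ((u j + u' j) / 2 * (P (j + 1) - P j)) := fun j hj =>
    half_mul_sq_eq_of_momentum_update (hmn j).ne' (hmom j hj)
  rw [sum_congr rfl hint, sum_congr rfl hkin, sum_sub_distrib, sum_sub_distrib, ← mul_sum,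
    ← mul_sum]
  linear_combination -Δt * sum_Icc_mul_sub_add_sum_range_mul_sub N P (fun j => (u j + u' j) / 2)

/-- Conservation of total energy for the SGH predictor step. Nodes j = 0,…,N carry
masses m_j and velocities; cells i = 1,…,N (between nodes i−1 and i) carry masses and
internal energies; P 0 and P (N+1) are the boundary pressures. The total energy changes
only by the boundary flux Δt(P_{N+1} u*_N − P_0 u*_0), where u*_j = (u_j + u'_j)/2. -/
theorem sgh_energy_conservation (N : ℕ) (mnode mcell u u' ε ε' P : ℕ → ℝ) (Δt : ℝ)
    (hmn : ∀ j, 0 < mnode j) (hmc : ∀ i, 0 < mcell i) (hΔt : 0 < Δt)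
    (hmom : ∀ j ∈ Finset.range (N + 1),
      u' j = u j - Δt / mnode j * (P (j + 1) - P j))
    (heps : ∀ i ∈ Finset.Icc 1 N,
      ε' i = ε i - Δt / mcell i * P i *
        ((u i + u' i) / 2 - (u (i - 1) + u' (i - 1)) / 2)) :
    (∑ i ∈ Finset.Icc 1 N, mcell i * ε' i) +
        ∑ j ∈ Finset.range (N + 1), (1 / 2) * mnode j * (u' j) ^ 2 =
      (∑ i ∈ Finset.Icc 1 N, mcell i * ε i) +
          ∑ j ∈ Finset.range (N + 1), (1 / 2) * mnode j * (u j) ^ 2 -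
        Δt * (P (N + 1) * ((u N + u' N) / 2) - P 0 * ((u 0 + u' 0) / 2)) :=
  sgh_energy_conservation_general N mnode mcell u u' ε ε' P Δt hmn hmc hmom heps
end
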